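/- Let Σ be a (d−1)-dimensional normal pseudomanifold with a linearly generic d-dimensional subspace M ⊆ K[Σ]^1, and let γ be a (d−m−1)-dimensional face of Σ. Then every element x of the degree-m part of A^*(Σ) = K[Σ]/(M) can be written as a K-linear combination of squarefree monomials x_η, where each η is an (m−1)-dimensional face of Σ disjoint from γ. -/

import Mathlib

open MvPolynomial

set_option synthInstance.maxHeartbeats 1000000
set_option maxHeartbeats 1000000

/-- A simplicial complex on a vertex type `V`: a nonempty, downward closed
collection of finite subsets of `V`. -/
structure SComplex (V : Type*) [DecidableEq V] where
  faces : Finset (Finset V)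
  nonempty : faces.Nonempty
  down_closed : ∀ σ ∈ faces, ∀ τ ⊆ σ, τ ∈ faces

namespace SComplex

variable {V : Type*} [DecidableEq V]

theorem empty_mem (Δ : SComplex V) : (∅ : Finset V) ∈ Δ.faces := by
  obtain ⟨σ, hσ⟩ := Δ.nonempty
  exact Δ.down_closed σ hσ ∅ (Finset.empty_subset σ)

/-- The Stanley–Reisner ideal of a simplicial complex: generated by the
squarefree monomials `x_S` for non-faces `S`. -/
noncomputable def SRideal (K : Type*) [Field K] (Δ : SComplex V) : Ideal (MvPolynomial V K) :=
  Ideal.span { p | ∃ S : Finset V, S ∉ Δ.faces ∧ p = ∏ v ∈ S, X v }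

/-- The set of `d`-element faces ("facets" of a `(d-1)`-dimensional complex). -/
def facets (Δ : SComplex V) (d : ℕ) : Finset (Finset V) :=
  Δ.faces.filter fun σ => σ.card = d

/-- Purity: every face is contained in a `d`-element face. -/
def Pure (Δ : SComplex V) (d : ℕ) : Prop :=
  ∀ σ ∈ Δ.faces, ∃ τ ∈ Δ.faces, σ ⊆ τ ∧ τ.card = d

/-- Two facets are adjacent if they share a `(d-1)`-element face. -/
def Adj (Δ : SComplex V) (d : ℕ) (σ σ' : Finset V) : Prop :=
  σ ∈ facets Δ d ∧ σ' ∈ facets Δ d ∧ (σ ∩ σ').card = d - 1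

/-- Strong connectivity: any two facets are joined by a face path. -/
def StronglyConnected (Δ : SComplex V) (d : ℕ) : Prop :=
  ∀ σ ∈ facets Δ d, ∀ σ' ∈ facets Δ d, Relation.ReflTransGen (Adj Δ d) σ σ'

/-- A `(d-1)`-dimensional pseudomanifold (without boundary): pure, every
`(d-2)`-face lies in exactly two facets, and strongly connected. -/
def IsPseudomanifold (Δ : SComplex V) (d : ℕ) : Prop :=
  Pure Δ d ∧
  (∀ τ ∈ Δ.faces, τ.card = d - 1 → ((facets Δ d).filter fun σ => τ ⊆ σ).card = 2) ∧
  StronglyConnected Δ d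

/-- The link of a face. -/
def link (Δ : SComplex V) (τ : Finset V) (h : τ ∈ Δ.faces) : SComplex V where
  faces := Δ.faces.filter fun σ => Disjoint σ τ ∧ σ ∪ τ ∈ Δ.faces
  nonempty := ⟨∅, by
    simp only [Finset.mem_filter]
    exact ⟨Δ.empty_mem, Finset.disjoint_empty_left τ, by simpa using h⟩⟩
  down_closed := by
    intro σ hσ ρ hρ
    simp only [Finset.mem_filter] at hσ ⊢
    exact ⟨Δ.down_closed σ hσ.1 ρ hρ, hσ.2.1.mono_left hρ,
      Δ.down_closed _ hσ.2.2 _ (Finset.union_subset_union hρ le_rfl)⟩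

/-- Graph connectivity of a complex: there is a vertex and any two vertices
are joined by an edge path. -/
def Connected (Δ : SComplex V) : Prop :=
  (∃ v, {v} ∈ Δ.faces) ∧
  ∀ u w : V, {u} ∈ Δ.faces → {w} ∈ Δ.faces →
    Relation.ReflTransGen (fun x y => ({x, y} : Finset V) ∈ Δ.faces) u w

/-- A normal pseudomanifold: a pseudomanifold all of whose links of faces of
codimension at least two are connected. -/
def IsNormalPM (Δ : SComplex V) (d : ℕ) : Prop :=
  IsPseudomanifold Δ d ∧
  ∀ τ (h : τ ∈ Δ.faces), τ.card + 2 ≤ d → Connected (Δ.link τ h)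

/-- The star of a vertex, as a simplicial complex (on the same ambient
vertex type). -/
def starComplex (Δ : SComplex V) (v : V) (hv : {v} ∈ Δ.faces) : SComplex V where
  faces := Δ.faces.filter fun τ => insert v τ ∈ Δ.faces
  nonempty := ⟨∅, by
    simp only [Finset.mem_filter]
    exact ⟨Δ.empty_mem, by simpa using hv⟩⟩
  down_closed := by
    intro σ hσ ρ hρ
    simp only [Finset.mem_filter] at hσ ⊢
    exact ⟨Δ.down_closed σ hσ.1 ρ hρ,
      Δ.down_closed _ hσ.2 _ (Finset.insert_subset_insert v hρ)⟩

end SComplex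

section Chains

variable {V : Type*} [DecidableEq V] [Fintype V] [LinearOrder V]
variable (K : Type*) [Field K]

/-- `m`-dimensional chains: functions on faces with `m` elements. -/
def chainsp (Δ : SComplex V) (m : ℕ) : Type _ :=
  {σ : Finset V // σ ∈ Δ.faces ∧ σ.card = m} → K

noncomputable instance (Δ : SComplex V) (m : ℕ) : AddCommGroup (chainsp K Δ m) :=
  Pi.addCommGroup

noncomputable instance (Δ : SComplex V) (m : ℕ) : Module K (chainsp K Δ m) :=
  Pi.module _ _ _

/-- The simplicial boundary map of the (augmented) chain complex, using the
orderings induced by the linear order on `V` and the usual incidence signs. -/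
noncomputable def bdry (Δ : SComplex V) (m : ℕ) :
    chainsp K Δ (m + 1) →ₗ[K] chainsp K Δ m where
  toFun f τ := ∑ v : V,
    if h : v ∉ τ.1 ∧ insert v τ.1 ∈ Δ.faces then
      (-1 : K) ^ ((insert v τ.1).filter fun u => u < v).card *
        f ⟨insert v τ.1, h.2, by rw [Finset.card_insert_of_notMem h.1, τ.2.2]⟩
    else 0
  map_add' f g := by
    funext τ
    show _ = (_ : K) + _
    rw [← Finset.sum_add_distrib]
    refine Finset.sum_congr rfl fun v _ => ?_
    split
    · show _ * ((f _ : K) + g _) = _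
      ring
    · simp
  map_smul' c f := by
    funext τ
    show _ = c * _
    rw [Finset.mul_sum]
    refine Finset.sum_congr rfl fun v _ => ?_
    split
    · show _ * (c * (f _ : K)) = _
      ring
    · simp

/-- The cycles in degree `m` (everything in degree `0`, which is the span of
the empty face in the augmented complex). -/
noncomputable def kerAt (Δ : SComplex V) :
    (m : ℕ) → Submodule K (chainsp K Δ m)
  | 0 => ⊤
  | m + 1 => LinearMap.ker (bdry K Δ m)

/-- The complex has the reduced `K`-homology of an `(n-1)`-dimensional sphere:
it is at most `(n-1)`-dimensional, reduced homology vanishes below the top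
degree, and the top reduced homology is one-dimensional. -/
def HomologySphereShape (Δ : SComplex V) (n : ℕ) : Prop :=
  (∀ σ ∈ Δ.faces, σ.card ≤ n) ∧
  (∀ m < n, kerAt K Δ m = LinearMap.range (bdry K Δ m)) ∧
  Module.finrank K (kerAt K Δ n) =
    Module.finrank K (LinearMap.range (bdry K Δ n)) + 1

/-- A `K`-homology sphere of dimension `d-1`: the complex and all links of
its nonempty faces have the reduced `K`-homology of spheres of the
appropriate dimensions. -/
def IsKHomologySphere (Δ : SComplex V) (d : ℕ) : Prop :=
  HomologySphereShape K Δ d ∧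
  ∀ τ (h : τ ∈ Δ.faces), τ.Nonempty →
    HomologySphereShape K (Δ.link τ h) (d - τ.card)

end Chains

section Linear

variable {V : Type*} [DecidableEq V]
variable (K : Type*) [Field K]

/-- The coefficient of `x_v`, as a linear functional on polynomials. -/
noncomputable def coeffLin (v : V) : MvPolynomial V K →ₗ[K] K where
  toFun p := coeff (Finsupp.single v 1) p
  map_add' p q := coeff_add _ p q
  map_smul' c p := coeff_smul _ c p

/-- `M` is a linearly generic `n`-dimensional subspace of the degree one part:
any at most `n` vertices have linearly independent images in `M^∨`. -/
def LinGenericM [Fintype V] (n : ℕ) (M : Submodule K (MvPolynomial V K)) : Prop :=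
  M ≤ Submodule.span K (Set.range (X : V → MvPolynomial V K)) ∧
  Module.finrank K M = n ∧
  ∀ S : Finset V, S.card ≤ n →
    LinearIndependent K fun v : ↥S => ((coeffLin K v.1).comp M.subtype)

set_option synthInstance.maxHeartbeats 1000000 in
/-- A regular parameter space: an `n`-dimensional subspace of the degree one
part containing a length `n` regular sequence for the Stanley–Reisner ring. -/
def RegularParamSpace [Fintype V] (Δ : SComplex V) (n : ℕ)
    (M : Submodule K (MvPolynomial V K)) : Prop :=
  M ≤ Submodule.span K (Set.range (X : V → MvPolynomial V K)) ∧
  Module.finrank K M = n ∧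
  ∃ ℓ : Fin n → MvPolynomial V K, (∀ i, ℓ i ∈ M) ∧
    RingTheory.Sequence.IsRegular (MvPolynomial V K ⧸ SComplex.SRideal K Δ)
      (List.ofFn fun i => Ideal.Quotient.mk (SComplex.SRideal K Δ) (ℓ i))

/-- Linear genericity of a system of coordinates `a : V → K^d`: the images of
any at most `d` vertices are linearly independent. -/
def LinGeneric [Fintype V] (d : ℕ) (a : V → Fin d → K) : Prop :=
  ∀ S : Finset V, S.card ≤ d → LinearIndependent K fun v : ↥S => a v.1

end Linear
section Cone

variable {V : Type*} [DecidableEq V]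

namespace SComplex

/-- The cone over a complex, with apex the new vertex `none`. -/
def coneC (Δ : SComplex V) : SComplex (Option V) where
  faces := (Δ.faces.image (Finset.image some)) ∪
    (Δ.faces.image fun σ => insert none (σ.image some))
  nonempty := ⟨∅, by
    simp only [Finset.mem_union, Finset.mem_image]
    exact Or.inl ⟨∅, Δ.empty_mem, rfl⟩⟩
  down_closed := by
    intro σ hσ ρ hρ
    simp only [Finset.mem_union, Finset.mem_image] at hσ ⊢
    have key : ∃ τ ∈ Δ.faces, ρ.erase none = τ.image some := by
      obtain ⟨τ₀, hτ₀, rfl⟩ | ⟨τ₀, hτ₀, rfl⟩ := hσ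
      · have : ρ.erase none ⊆ τ₀.image some :=
          (Finset.erase_subset none ρ).trans hρ
        obtain ⟨τ, hττ, hτ⟩ := Finset.subset_image_iff.mp this
        exact ⟨τ, Δ.down_closed τ₀ hτ₀ τ hττ, hτ.symm⟩
      · have : ρ.erase none ⊆ τ₀.image some := by
          intro x hx
          rcases Finset.mem_erase.mp hx with ⟨hx1, hx2⟩
          rcases Finset.mem_insert.mp (hρ hx2) with h | h
          · exact absurd h hx1
          · exact h
        obtain ⟨τ, hττ, hτ⟩ := Finset.subset_image_iff.mp this
        exact ⟨τ, Δ.down_closed τ₀ hτ₀ τ hττ, hτ.symm⟩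
    obtain ⟨τ, hτ, hρτ⟩ := key
    by_cases hn : none ∈ ρ
    · refine Or.inr ⟨τ, hτ, ?_⟩
      rw [← hρτ, Finset.insert_erase hn]
    · refine Or.inl ⟨τ, hτ, ?_⟩
      rw [← hρτ, Finset.erase_eq_self.mpr hn]

/-- The suspension of a complex on `V`, with poles `Sum.inr true` and
`Sum.inr false`: faces are the sets whose `V`-part is a face and which do not
contain both poles. -/
def susp [Fintype V] (Δ : SComplex V) : SComplex (V ⊕ Bool) where
  faces := Finset.univ.filter fun σ : Finset (V ⊕ Bool) =>
    σ.toLeft ∈ Δ.faces ∧ ¬(Sum.inr true ∈ σ ∧ Sum.inr false ∈ σ)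
  nonempty := ⟨∅, by
    simp only [Finset.mem_filter, Finset.mem_univ, true_and]
    exact ⟨by convert Δ.empty_mem using 1; ext x; simp [Finset.mem_toLeft], by simp⟩⟩
  down_closed := by
    intro σ hσ ρ hρ
    simp only [Finset.mem_filter, Finset.mem_univ, true_and] at hσ ⊢
    constructor
    · refine Δ.down_closed _ hσ.1 _ ?_
      intro x hx
      rw [Finset.mem_toLeft] at hx ⊢
      exact hρ hx
    · intro ⟨h1, h2⟩
      exact hσ.2 ⟨hρ h1, hρ h2⟩

end SComplex

end Cone

section Orientation

variable {V : Type*} [DecidableEq V] [LinearOrder V]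
variable (K : Type*) [Field K]

/-- The incidence sign of a vertex in a face, relative to the sorted order. -/
def incSign (σ : Finset V) (v : V) : ℤ :=
  (-1) ^ (σ.filter fun u => u < v).card

/-- An orientation of a `(d-1)`-dimensional pseudomanifold: a choice of sign
for each facet such that the two facets containing any `(d-2)`-face induce
opposite orientations on it. -/
def IsOrientation (Δ : SComplex V) (d : ℕ) (ε : Finset V → ℤ) : Prop :=
  (∀ σ ∈ SComplex.facets Δ d, ε σ = 1 ∨ ε σ = -1) ∧
  ∀ τ ∈ Δ.faces, τ.card = d - 1 →
    ∀ σ₁ ∈ SComplex.facets Δ d, ∀ σ₂ ∈ SComplex.facets Δ d, σ₁ ≠ σ₂ →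
      τ ⊆ σ₁ → τ ⊆ σ₂ → ∀ v₁ ∈ σ₁ \ τ, ∀ v₂ ∈ σ₂ \ τ,
        ε σ₁ * incSign σ₁ v₁ = -(ε σ₂ * incSign σ₂ v₂)

/-- The oriented determinant `[σ]` of a facet: the determinant of the matrix
of coordinates of its vertices (listed in increasing order), multiplied by
the orientation sign. -/
noncomputable def obrack (d : ℕ) (ε : Finset V → ℤ) (a : V → Fin d → K)
    (σ : Finset V) : K :=
  if h : σ.card = d then
    (ε σ : K) * Matrix.det (Matrix.of fun i j : Fin d => a (σ.orderIsoOfFin h j) i)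
  else 0

/-- The linear form `[σ_v]`, as a polynomial in the coordinates on `N`:
the determinant of the coordinate matrix of `σ` with the column of `v`
replaced by the variable vector, multiplied by the orientation sign. -/
noncomputable def obrackVar (d : ℕ) (ε : Finset V → ℤ) (a : V → Fin d → K)
    (σ : Finset V) (v : V) : MvPolynomial (Fin d) K :=
  if h : σ.card = d then
    (ε σ : MvPolynomial (Fin d) K) *
      Matrix.det (Matrix.of fun i j : Fin d =>
        if (σ.orderIsoOfFin h j : V) = v then X i
        else C (a (σ.orderIsoOfFin h j) i))
  else 0

variable (d : ℕ) (ε : Finset V → ℤ) (a : V → Fin d → K)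

/-- The field of rational functions on `N`. -/
abbrev RatFun := FractionRing (MvPolynomial (Fin d) K)

/-- Polynomials on `N` as rational functions. -/
noncomputable def toF : MvPolynomial (Fin d) K →+* RatFun K d :=
  algebraMap (MvPolynomial (Fin d) K) (RatFun K d)

/-- Restriction of an element of the Stanley–Reisner polynomial ring to (the
span of) a facet `σ`, via the Courant functions `Ψ_v = [σ_v]/[σ]`. -/
noncomputable def restrictF (σ : Finset V) (f : MvPolynomial V K) : RatFun K d :=
  MvPolynomial.eval₂ ((toF K d).comp (C : K →+* MvPolynomial (Fin d) K))
    (fun v => toF K d (obrackVar K d ε a σ v) / toF K d (C (obrack K d ε a σ))) f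

/-- The term of the degree map attached to a facet `σ` with value `g` on `σ`:
`g/(χ_σ [σ]) = g·[σ]^{d-1}/∏_{v ∈ σ}[σ_v]`. -/
noncomputable def volTerm (σ : Finset V) (g : MvPolynomial (Fin d) K) : RatFun K d :=
  toF K d g * toF K d (C (obrack K d ε a σ)) ^ (d - 1) /
    ∏ v ∈ σ, toF K d (obrackVar K d ε a σ v)

/-- The degree map on piecewise polynomials `(g σ)_σ`. -/
noncomputable def VolPP (Δ : SComplex V) (g : Finset V → MvPolynomial (Fin d) K) :
    RatFun K d :=
  ∑ σ ∈ SComplex.facets Δ d, volTerm K d ε a σ (g σ)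

/-- The degree map on the Stanley–Reisner polynomial ring. -/
noncomputable def VolSR (Δ : SComplex V) (f : MvPolynomial V K) : RatFun K d :=
  ∑ σ ∈ SComplex.facets Δ d, restrictF K d ε a σ f * toF K d (C (obrack K d ε a σ)) ^ (d - 1) /
    ∏ v ∈ σ, toF K d (obrackVar K d ε a σ v)

end Orientation

section Deriv

variable {k K : Type*} [CommRing k] [CommRing K] [Algebra k K]

/-- The composite of a finite family of derivations, as a map. -/
def compApply {m : ℕ} (D : Fin m → Derivation k K K) : K → K :=
  (List.ofFn fun j => ⇑(D j)).foldr Function.comp id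

end Deriv
section Generic

/-- The field `k(a_x : x ∈ I)` of rational functions over `k` in
indeterminates indexed by `I`. -/
abbrev GField (k : Type*) [Field k] (I : Type*) : Type _ :=
  FractionRing (MvPolynomial I k)

/-- The indeterminate `a_x` as an element of `k(a)`. -/
noncomputable def gen (k : Type*) [Field k] {I : Type*} (x : I) : GField k I :=
  algebraMap (MvPolynomial I k) (GField k I) (X x)

/-- The generic coordinates `a_{vi}` of the vertices. -/
noncomputable def genCoord (k : Type*) [Field k] (V : Type*) (d : ℕ) (v : V)
    (i : Fin d) : GField k (V × Fin d) := gen k (v, i)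

/-- The generic linear system of parameters `ℓ_i = Σ_v a_{vi} x_v`. -/
noncomputable def genL (k : Type*) [Field k] (V : Type*) [Fintype V] (d : ℕ)
    (i : Fin d) : MvPolynomial V (GField k (V × Fin d)) :=
  ∑ v : V, C (genCoord k V d v i) * X v

/-- The ideal `I_Σ + (ℓ_1,…,ℓ_d)` defining the Artinian reduction
`A^*(Σ)` for the generic parameter space. -/
noncomputable def genJ (k : Type*) [Field k] {V : Type*} [DecidableEq V]
    [Fintype V] (d : ℕ) (Δ : SComplex V) :
    Ideal (MvPolynomial V (GField k (V × Fin d))) :=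
  SComplex.SRideal _ Δ ⊔ Ideal.span (Set.range (genL k V d))

end Generic

/-!
Linear genericity gives, for every set `T` of at most `d` vertices and `v ∈ T`, a linear form
in `M` whose only coefficient on `T` is a `1` at `v`. Multiplying it by a monomial `x^b` shows
that in `A^*(Σ)` the monomial `x^b x_v` is a combination of the `x^b x_w` with `w ∉ T`.
With `T` the support, this raises the support of a non-squarefree monomial until it is
squarefree; with `T = η ∪ γ` and `v ∈ η ∩ γ`, it replaces a vertex of `η` on `γ` by one off
`γ ∪ η`. Squarefree monomials on non-faces vanish in the Stanley–Reisner ring.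
-/

section Displacement

open SComplex

variable {V : Type*} [DecidableEq V] {K : Type*} [Field K]

theorem mk_prod_X_eq_zero_of_notMem_faces {Δ : SComplex V} {I : Ideal (MvPolynomial V K)}
    (hSR : SRideal K Δ ≤ I) {η : Finset V} (hη : η ∉ Δ.faces) :
    Ideal.Quotient.mk I (∏ v ∈ η, X v) = 0 :=
  Ideal.Quotient.eq_zero_iff_mem.mpr (hSR (Ideal.subset_span ⟨η, hη, rfl⟩))

theorem monomial_one_eq_multiset_prod_X (a : V →₀ ℕ) :
    monomial a (1 : K) = (a.toMultiset.map X).prod := by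
  rw [Finset.prod_multiset_map_count, ← prod_X_pow_eq_monomial, Finsupp.toFinset_toMultiset]
  simp only [Finsupp.count_toMultiset]

variable [Fintype V]

theorem LinGenericM.exists_linear_form {d : ℕ} {M : Submodule K (MvPolynomial V K)}
    (hgen : LinGenericM K d M) {T : Finset V} (hT : T.card ≤ d) {v : V} (hv : v ∈ T) :
    ∃ c : V → K, ∑ w, c w • X w ∈ M ∧ c v = 1 ∧ ∀ u ∈ T, u ≠ v → c u = 0 := by
  let Φ : M →ₗ[K] T → K := LinearMap.pi fun u => (coeffLin K u.1).comp M.subtype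
  -- the coordinate functionals `T → Dual K M` are independent, so `Φ` is onto
  have hΦ : LinearMap.range Φ = ⊤ := by
    have hli := (hgen.2.2 T hT).map' (LinearMap.ltoFun K M K K)
      (LinearMap.ker_eq_bot.mpr DFunLike.coe_injective)
    rw [← span_flip_eq_top_iff_linearIndependent] at hli
    rw [← hli, ← Submodule.span_eq (LinearMap.range Φ), LinearMap.coe_range]
    rfl
  obtain ⟨ℓ, hℓ⟩ : Pi.single ⟨v, hv⟩ 1 ∈ LinearMap.range Φ := hΦ ▸ Submodule.mem_top
  obtain ⟨c, hc⟩ := (Submodule.mem_span_range_iff_exists_fun K).mp (hgen.1 ℓ.2)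
  have hcoeff : ∀ u : T, c u = Φ ℓ u := fun u => by
    change c u = coeff (Finsupp.single u.1 1) (ℓ : MvPolynomial V K)
    simp [← hc, coeff_sum, coeff_X, Finsupp.single_left_inj]
  refine ⟨c, hc ▸ ℓ.2, by simpa [hℓ] using hcoeff ⟨v, hv⟩, fun u hu huv => ?_⟩
  simpa [hℓ, huv] using hcoeff ⟨u, hu⟩

theorem LinGenericM.mk_mul_X_mem_of_forall_notMem {d : ℕ} {M : Submodule K (MvPolynomial V K)}
    (hgen : LinGenericM K d M) {I : Ideal (MvPolynomial V K)}
    (hMI : (M : Set (MvPolynomial V K)) ⊆ I) {W : Submodule K (MvPolynomial V K ⧸ I)}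
    {T : Finset V} (hT : T.card ≤ d) {v : V}
    (hv : v ∈ T) (q : MvPolynomial V K)
    (hW : ∀ w ∉ T, Ideal.Quotient.mk I (q * X w) ∈ W) :
    Ideal.Quotient.mk I (q * X v) ∈ W := by
  obtain ⟨c, hcM, hcv, hcT⟩ := hgen.exists_linear_form hT hv
  have hrel : ∑ w, c w • Ideal.Quotient.mkₐ K I (q * X w) = 0 := by
    rw [← Ideal.Quotient.eq_zero_iff_mem.mpr (I.mul_mem_left q (hMI hcM))]
    simp_rw [← Ideal.Quotient.mkₐ_eq_mk K, Finset.mul_sum, map_sum, mul_smul_comm, map_smul]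
  rw [← Finset.add_sum_erase _ _ (Finset.mem_univ v), hcv, one_smul] at hrel
  rw [← Ideal.Quotient.mkₐ_eq_mk K, eq_neg_of_add_eq_zero_left hrel]
  refine W.neg_mem (W.sum_mem fun w hw => ?_)
  by_cases hwT : w ∈ T
  · simp [hcT w hwT (Finset.ne_of_mem_erase hw)]
  · exact W.smul_mem _ (hW w hwT)

theorem LinGenericM.mk_prod_X_mem_span_disjoint {d m : ℕ} {M : Submodule K (MvPolynomial V K)}
    (hgen : LinGenericM K d M) {Δ : SComplex V} {I : Ideal (MvPolynomial V K)}
    (hSR : SRideal K Δ ≤ I) (hMI : (M : Set (MvPolynomial V K)) ⊆ I) {γ : Finset V}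
    (hγ : m + γ.card ≤ d) {η : Finset V} (hη : η.card = m) :
    Ideal.Quotient.mk I (∏ v ∈ η, X v) ∈ Submodule.span K
      {y | ∃ η ∈ Δ.faces, η.card = m ∧ Disjoint η γ ∧ y = Ideal.Quotient.mk I (∏ v ∈ η, X v)} := by
  induction hn : (η ∩ γ).card generalizing η with
  | zero =>
    by_cases hηΔ : η ∈ Δ.faces
    · exact Submodule.subset_span
        ⟨η, hηΔ, hη, Finset.disjoint_iff_inter_eq_empty.mpr (Finset.card_eq_zero.mp hn), rfl⟩
    · rw [mk_prod_X_eq_zero_of_notMem_faces hSR hηΔ]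
      exact Submodule.zero_mem _
  | succ n ih =>
    obtain ⟨v, hv⟩ : (η ∩ γ).Nonempty := Finset.card_pos.mp (by omega)
    obtain ⟨hvη, hvγ⟩ := Finset.mem_inter.mp hv
    rw [← Finset.prod_erase_mul _ _ hvη]
    refine hgen.mk_mul_X_mem_of_forall_notMem hMI ((Finset.card_union_le η γ).trans (by omega))
      (Finset.mem_union_left γ hvη) _ fun w hw => ?_
    obtain ⟨hwη, hwγ⟩ : w ∉ η ∧ w ∉ γ := by simpa using hw
    have hwη' : w ∉ η.erase v := fun h => hwη (Finset.mem_of_mem_erase h)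
    rw [mul_comm, ← Finset.prod_insert hwη']
    refine ih (by rw [Finset.card_insert_of_notMem hwη', Finset.card_erase_add_one hvη, hη]) ?_
    rw [Finset.insert_inter_of_notMem hwγ, Finset.erase_inter, Finset.card_erase_of_mem hv, hn]
    rfl

theorem LinGenericM.mk_multiset_prod_X_mem_span {d m : ℕ} {M : Submodule K (MvPolynomial V K)}
    (hgen : LinGenericM K d M) (hm : m ≤ d) {I : Ideal (MvPolynomial V K)}
    (hMI : (M : Set (MvPolynomial V K)) ⊆ I) (s : Multiset V) (hs : Multiset.card s = m) :
    Ideal.Quotient.mk I (s.map X).prod ∈ Submodule.span K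
      {y | ∃ η : Finset V, η.card = m ∧ y = Ideal.Quotient.mk I (∏ v ∈ η, X v)} := by
  induction hn : m - s.toFinset.card using Nat.strong_induction_on generalizing s with
  | _ n ih =>
  by_cases hnd : s.Nodup
  · refine Submodule.subset_span ⟨s.toFinset, (Multiset.toFinset_card_of_nodup hnd).trans hs, ?_⟩
    rw [Finset.prod_eq_multiset_prod, Multiset.toFinset_val, Multiset.dedup_eq_self.mpr hnd]
  have hlt : s.toFinset.card < m :=
    hs ▸ (Multiset.toFinset_card_le s).lt_of_ne (mt Multiset.toFinset_card_eq_card_iff_nodup.mp hnd)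
  obtain ⟨v, t, rfl⟩ : ∃ v t, s = v ::ₘ v ::ₘ t := by
    simpa [Multiset.nodup_iff_ne_cons_cons] using hnd
  rw [Multiset.map_cons, Multiset.prod_cons, mul_comm]
  refine hgen.mk_mul_X_mem_of_forall_notMem hMI (T := (v ::ₘ v ::ₘ t).toFinset) (by omega)
    (by simp) _ fun w hw => ?_
  rw [mul_comm, ← Multiset.prod_cons, ← Multiset.map_cons]
  have hcard : (w ::ₘ v ::ₘ t).toFinset.card = (v ::ₘ v ::ₘ t).toFinset.card + 1 := by
    rw [← Finset.card_insert_of_notMem hw]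
    simp
  exact ih _ (by omega) _ (by simpa using hs) rfl

theorem LinGenericM.mk_mem_span_prod_X_of_isHomogeneous {d m : ℕ}
    {M : Submodule K (MvPolynomial V K)}
    (hgen : LinGenericM K d M) (hm : m ≤ d) {I : Ideal (MvPolynomial V K)}
    (hMI : (M : Set (MvPolynomial V K)) ⊆ I) {p : MvPolynomial V K} (hp : p.IsHomogeneous m) :
    Ideal.Quotient.mk I p ∈ Submodule.span K
      {y | ∃ η : Finset V, η.card = m ∧ y = Ideal.Quotient.mk I (∏ v ∈ η, X v)} := by
  rw [← support_sum_monomial_coeff p, map_sum]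
  refine Submodule.sum_mem _ fun a ha => ?_
  have hcard : Multiset.card a.toMultiset = m := by
    rw [← hp (mem_support_iff.mp ha)]
    simp [Finsupp.weight_apply, Finsupp.sum]
  rw [← mul_one (coeff a p), ← smul_eq_mul, ← smul_monomial, monomial_one_eq_multiset_prod_X,
    ← Ideal.Quotient.mkₐ_eq_mk K, map_smul]
  exact Submodule.smul_mem _ _ (hgen.mk_multiset_prod_X_mem_span hm hMI _ hcard)

end Displacement

open SComplex in
theorem displacement_lemma_general
    {V : Type*} [DecidableEq V] [Fintype V] (K : Type*) [Field K]
    (Δ : SComplex V) (d m : ℕ) (hm : m ≤ d)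
    (M : Submodule K (MvPolynomial V K)) (hgen : LinGenericM K d M)
    (γ : Finset V) (hγc : γ.card = d - m)
    (p : MvPolynomial V K) (hp : p.IsHomogeneous m) :
    Ideal.Quotient.mk (SRideal K Δ ⊔ Ideal.span (M : Set (MvPolynomial V K))) p ∈
      Submodule.span K
        {y : MvPolynomial V K ⧸ (SRideal K Δ ⊔ Ideal.span (M : Set (MvPolynomial V K))) |
          ∃ η ∈ Δ.faces, η.card = m ∧ Disjoint η γ ∧
            y = Ideal.Quotient.mk (SRideal K Δ ⊔ Ideal.span (M : Set (MvPolynomial V K)))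
              (∏ v ∈ η, X v)} := by
  set I := SRideal K Δ ⊔ Ideal.span (M : Set (MvPolynomial V K))
  have hMI : (M : Set (MvPolynomial V K)) ⊆ I := fun _ hx =>
    Ideal.mem_sup_right (Ideal.subset_span hx)
  refine Submodule.span_le.mpr ?_ (hgen.mk_mem_span_prod_X_of_isHomogeneous hm hMI hp)
  rintro _ ⟨η, hη, rfl⟩
  exact hgen.mk_prod_X_mem_span_disjoint le_sup_left hMI (by omega) hη

open SComplex in
/-- **Displacement Lemma.** For a normal pseudomanifold with a
linearly generic parameter subspace, every degree-`m` element of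
`A^*(Σ) = K[Σ]/(M)` is a linear combination of squarefree monomials `x_η`
with `η` an `(m-1)`-face disjoint from a given `(d-m-1)`-face `γ`. -/
theorem displacement_lemma
    {V : Type*} [DecidableEq V] [Fintype V] (K : Type*) [Field K]
    (Δ : SComplex V) (d m : ℕ) (hm : m ≤ d) (hpm : IsNormalPM Δ d)
    (M : Submodule K (MvPolynomial V K)) (hgen : LinGenericM K d M)
    (γ : Finset V) (hγ : γ ∈ Δ.faces) (hγc : γ.card = d - m)
    (p : MvPolynomial V K) (hp : p.IsHomogeneous m) :
    Ideal.Quotient.mk (SRideal K Δ ⊔ Ideal.span (M : Set (MvPolynomial V K))) p ∈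
      Submodule.span K
        {y : MvPolynomial V K ⧸ (SRideal K Δ ⊔ Ideal.span (M : Set (MvPolynomial V K))) |
          ∃ η ∈ Δ.faces, η.card = m ∧ Disjoint η γ ∧
            y = Ideal.Quotient.mk (SRideal K Δ ⊔ Ideal.span (M : Set (MvPolynomial V K)))
              (∏ v ∈ η, X v)} :=
  displacement_lemma_general K Δ d m hm M hgen γ hγc p hp
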